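/- arXiv:1609.05483 — 3 statements merged into one kernel-verified Lean document; each statement's English description precedes it below -/
import Mathlib

section
/- Let 0 < m ≤ M, ρ ∈ (0,1), and y > 0, q̂ > 0. Suppose (1 − δ_q)·ρ·y ≤ q̂ ≤ (1 + δ_q)·y/ρ where δ_q = (M − m)/(M + m). Define λ = (M + m)·ρ/(M + m·ρ²) and z = λ·q̂. Then (1 − δ_z)·y ≤ z ≤ (1 + δ_z)·y, where δ_z = (M − m·ρ²)/(M + m·ρ²). In particular |z − y|/y ≤ δ_z. -/
/-!
Since `1 - (M - m)/(M + m) = 2m/(M + m)` and `1 + (M - m)/(M + m) = 2M/(M + m)`, the hypothesis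
says `2mρ y/(M + m) ≤ q̂ ≤ 2M y/((M + m)ρ)`. Multiplying by `λ = (M + m)ρ/(M + mρ²)` gives exactly
`2mρ² y/(M + mρ²) ≤ λq̂ ≤ 2M y/(M + mρ²)`, and these two coefficients are `1 ∓ δ_z`.
-/

section

variable {m M ρ y q : ℝ}

theorem abs_sub_div_le_of_one_sub_mul_le_of_le_one_add_mul {δ x : ℝ} (hy : 0 < y)
    (hlow : (1 - δ) * y ≤ x) (hupp : x ≤ (1 + δ) * y) : |x - y| / y ≤ δ := by
  rw [div_le_iff₀ hy, abs_le]
  constructor <;> linarith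

theorem one_sub_mul_le_amplified (hMm : 0 < M + m) (hD : 0 < M + m * ρ ^ 2) (hρ : 0 ≤ ρ)
    (hlow : (1 - (M - m) / (M + m)) * ρ * y ≤ q) :
    (1 - (M - m * ρ ^ 2) / (M + m * ρ ^ 2)) * y ≤ (M + m) * ρ / (M + m * ρ ^ 2) * q :=
  calc (1 - (M - m * ρ ^ 2) / (M + m * ρ ^ 2)) * y
      = (M + m) * ρ / (M + m * ρ ^ 2) * ((1 - (M - m) / (M + m)) * ρ * y) := by
        field_simp
        ring
    _ ≤ (M + m) * ρ / (M + m * ρ ^ 2) * q :=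
        mul_le_mul_of_nonneg_left hlow (by positivity)

theorem amplified_le_one_add_mul (hMm : 0 < M + m) (hD : 0 < M + m * ρ ^ 2) (hρ : 0 < ρ)
    (hupp : q ≤ (1 + (M - m) / (M + m)) * y / ρ) :
    (M + m) * ρ / (M + m * ρ ^ 2) * q ≤ (1 + (M - m * ρ ^ 2) / (M + m * ρ ^ 2)) * y :=
  calc (M + m) * ρ / (M + m * ρ ^ 2) * q
      ≤ (M + m) * ρ / (M + m * ρ ^ 2) * ((1 + (M - m) / (M + m)) * y / ρ) :=
        mul_le_mul_of_nonneg_left hupp (by positivity)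
    _ = (1 + (M - m * ρ ^ 2) / (M + m * ρ ^ 2)) * y := by
        field_simp
        ring

end

theorem dvs_symmetric_error_bound_general
    (m M ρ y qhat : ℝ) (hm : 0 < m) (hmM : m ≤ M)
    (hρ : ρ ∈ Set.Ioo (0 : ℝ) 1) (hy : 0 < y)
    (hlow : (1 - (M - m) / (M + m)) * ρ * y ≤ qhat)
    (hupp : qhat ≤ (1 + (M - m) / (M + m)) * y / ρ) :
    (1 - (M - m * ρ ^ 2) / (M + m * ρ ^ 2)) * y ≤
      ((M + m) * ρ / (M + m * ρ ^ 2)) * qhat ∧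
    ((M + m) * ρ / (M + m * ρ ^ 2)) * qhat ≤
      (1 + (M - m * ρ ^ 2) / (M + m * ρ ^ 2)) * y ∧
    |((M + m) * ρ / (M + m * ρ ^ 2)) * qhat - y| / y ≤
      (M - m * ρ ^ 2) / (M + m * ρ ^ 2) := by
  have hρ0 : 0 < ρ := hρ.1
  have hM : 0 < M := hm.trans_le hmM
  have hMm : 0 < M + m := by positivity
  have hD : 0 < M + m * ρ ^ 2 := by positivity
  have lower := one_sub_mul_le_amplified hMm hD hρ0.le hlow
  have upper := amplified_le_one_add_mul hMm hD hρ0 hupp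
  exact ⟨lower, upper, abs_sub_div_le_of_one_sub_mul_le_of_le_one_add_mul hy lower upper⟩

theorem dvs_symmetric_error_bound
    (m M ρ y qhat : ℝ) (hm : 0 < m) (hmM : m ≤ M)
    (hρ : ρ ∈ Set.Ioo (0 : ℝ) 1) (hy : 0 < y) (hqhat : 0 < qhat)
    (hlow : (1 - (M - m) / (M + m)) * ρ * y ≤ qhat)
    (hupp : qhat ≤ (1 + (M - m) / (M + m)) * y / ρ) :
    (1 - (M - m * ρ ^ 2) / (M + m * ρ ^ 2)) * y ≤
      ((M + m) * ρ / (M + m * ρ ^ 2)) * qhat ∧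
    ((M + m) * ρ / (M + m * ρ ^ 2)) * qhat ≤
      (1 + (M - m * ρ ^ 2) / (M + m * ρ ^ 2)) * y ∧
    |((M + m) * ρ / (M + m * ρ ^ 2)) * qhat - y| / y ≤
      (M - m * ρ ^ 2) / (M + m * ρ ^ 2) :=
  dvs_symmetric_error_bound_general m M ρ y qhat hm hmM hρ hy hlow hupp
end

section
/- Let 0 < m ≤ M, δ̄ ∈ (0,1), and consider the constraint set S = {(ρ, λ̄) : 0 < ρ < 1 and max(1 − λ̄ρ/M, λ̄/(mρ) − 1) ≤ δ̄}. If (M/m)·(1−δ̄)/(1+δ̄) < 1, then the minimum of ρ over S is achieved at ρ* = sqrt((M/m)·(1−δ̄)/(1+δ̄)) with unique optimizer λ̄* = 2mM·ρ*/(M + m·(ρ*)²). -/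
/-!
Both constraints are linear in `λ̄` once `ρ > 0` is fixed: they say
`M (1 - δ̄) ≤ λ̄ ρ` and `λ̄ ≤ m ρ (1 + δ̄)`. Such a `λ̄` exists iff `M (1 - δ̄) ≤ m ρ² (1 + δ̄)`,
i.e. iff `ρ ≥ ρ*`, and at `ρ = ρ*` the two bounds on `λ̄ ρ*` coincide, which pins down
`λ̄* = m ρ* (1 + δ̄) = 2 m M ρ* / (M + m ρ*²)`.
-/

section

variable {m M δ ρ lam : ℝ}

theorem max_relErr_le_iff (hm : 0 < m) (hM : 0 < M) (hρ : 0 < ρ) :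
    max (1 - lam * ρ / M) (lam / (m * ρ) - 1) ≤ δ ↔
      M * (1 - δ) ≤ lam * ρ ∧ lam ≤ m * ρ * (1 + δ) := by
  rw [max_le_iff, sub_le_comm, le_div_iff₀ hM, sub_le_iff_le_add, div_le_iff₀ (mul_pos hm hρ),
    mul_comm (1 - δ), add_comm δ, mul_comm (1 + δ)]

theorem le_mul_sq_of_max_relErr_le (hm : 0 < m) (hM : 0 < M) (hρ : 0 < ρ)
    (h : max (1 - lam * ρ / M) (lam / (m * ρ) - 1) ≤ δ) :
    M * (1 - δ) ≤ m * ρ ^ 2 * (1 + δ) := by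
  obtain ⟨hlow, hup⟩ := (max_relErr_le_iff hm hM hρ).1 h
  calc M * (1 - δ) ≤ lam * ρ := hlow
    _ ≤ m * ρ * (1 + δ) * ρ := mul_le_mul_of_nonneg_right hup hρ.le
    _ = m * ρ ^ 2 * (1 + δ) := by ring

theorem max_relErr_le_of_mul_sq_eq (hm : 0 < m) (hM : 0 < M) (hρ : 0 < ρ)
    (hρ2 : m * ρ ^ 2 * (1 + δ) = M * (1 - δ)) :
    max (1 - m * ρ * (1 + δ) * ρ / M) (m * ρ * (1 + δ) / (m * ρ) - 1) ≤ δ :=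
  (max_relErr_le_iff hm hM hρ).2 ⟨(hρ2.symm.trans (by ring)).le, le_rfl⟩

theorem eq_of_max_relErr_le_of_mul_sq_eq (hm : 0 < m) (hM : 0 < M) (hρ : 0 < ρ)
    (hρ2 : m * ρ ^ 2 * (1 + δ) = M * (1 - δ))
    (h : max (1 - lam * ρ / M) (lam / (m * ρ) - 1) ≤ δ) :
    lam = m * ρ * (1 + δ) := by
  obtain ⟨hlow, hup⟩ := (max_relErr_le_iff hm hM hρ).1 h
  refine le_antisymm hup (le_of_mul_le_mul_right ?_ hρ)
  linear_combination hlow + hρ2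

theorem mul_mul_one_add_eq_of_mul_sq_eq (hm : 0 < m) (hM : 0 < M)
    (hρ2 : m * ρ ^ 2 * (1 + δ) = M * (1 - δ)) :
    m * ρ * (1 + δ) = 2 * m * M * ρ / (M + m * ρ ^ 2) := by
  rw [eq_div_iff (by positivity)]
  linear_combination (m * ρ) * hρ2

theorem mul_sq_sqrt_div (hm : 0 < m) (hM : 0 ≤ M) (hδ₁ : δ ≤ 1) (hδ₂ : 0 < 1 + δ) :
    m * √(M / m * (1 - δ) / (1 + δ)) ^ 2 * (1 + δ) = M * (1 - δ) := by
  have : 0 ≤ 1 - δ := by linarith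
  rw [Real.sq_sqrt (by positivity)]
  field_simp

theorem sqrt_div_le_iff (hm : 0 < m) (hδ : 0 < 1 + δ) (hρ : 0 ≤ ρ) :
    √(M / m * (1 - δ) / (1 + δ)) ≤ ρ ↔ M * (1 - δ) ≤ m * ρ ^ 2 * (1 + δ) := by
  rw [Real.sqrt_le_left hρ, div_le_iff₀ hδ, div_mul_eq_mul_div, div_le_iff₀ hm]
  ring_nf
end

theorem threshold_optimization
    (m M δb : ℝ) (hm : 0 < m) (hmM : m ≤ M) (hδb : δb ∈ Set.Ioo (0 : ℝ) 1)
    (hfeas : (M / m) * (1 - δb) / (1 + δb) < 1) :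
    (∃ lam : ℝ, 0 < Real.sqrt ((M / m) * (1 - δb) / (1 + δb)) ∧
      Real.sqrt ((M / m) * (1 - δb) / (1 + δb)) < 1 ∧
      max (1 - lam * Real.sqrt ((M / m) * (1 - δb) / (1 + δb)) / M)
        (lam / (m * Real.sqrt ((M / m) * (1 - δb) / (1 + δb))) - 1) ≤ δb) ∧
    (∀ ρ lam : ℝ, 0 < ρ → ρ < 1 →
      max (1 - lam * ρ / M) (lam / (m * ρ) - 1) ≤ δb →
      Real.sqrt ((M / m) * (1 - δb) / (1 + δb)) ≤ ρ) ∧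
    (∀ lam : ℝ,
      max (1 - lam * Real.sqrt ((M / m) * (1 - δb) / (1 + δb)) / M)
        (lam / (m * Real.sqrt ((M / m) * (1 - δb) / (1 + δb))) - 1) ≤ δb →
      lam = 2 * m * M * Real.sqrt ((M / m) * (1 - δb) / (1 + δb)) /
        (M + m * (Real.sqrt ((M / m) * (1 - δb) / (1 + δb))) ^ 2)) := by
  obtain ⟨hδ₀, hδ₁⟩ := hδb
  have hM : 0 < M := hm.trans_le hmM
  have hδ : 0 < 1 + δb := by linarith
  have hρpos : 0 < √(M / m * (1 - δb) / (1 + δb)) :=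
    Real.sqrt_pos.2 (div_pos (mul_pos (div_pos hM hm) (by linarith)) hδ)
  have hρlt : √(M / m * (1 - δb) / (1 + δb)) < 1 := by
    rwa [Real.sqrt_lt' one_pos, one_pow]
  have hopt := mul_sq_sqrt_div hm hM.le hδ₁.le hδ
  refine ⟨⟨_, hρpos, hρlt, max_relErr_le_of_mul_sq_eq hm hM hρpos hopt⟩, ?_, ?_⟩
  · intro ρ lam hρ _ h
    exact (sqrt_div_le_iff hm hδ hρ.le).2 (le_mul_sq_of_max_relErr_le hm hM hρ h)
  · intro lam h
    rw [eq_of_max_relErr_le_of_mul_sq_eq hm hM hρpos hopt h]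
    exact mul_mul_one_add_eq_of_mul_sq_eq hm hM hopt
end

section
/- Let 0 < m ≤ M, and for each pixel i let m_i, M_i > 0 with m_i ≤ M_i. Given δ* ∈ (0,1) with δ* > (M_i − m_i)/(M_i + m_i) for all i, define h_i = log_b sqrt((m_i/M_i)·(1+δ*)/(1−δ*)) and h* = min_i h_i = log_b sqrt(min_i(m_i/M_i)·(1+δ*)/(1−δ*)). Then for any common threshold h ≤ h*, every pixel's uncertainty satisfies δ_z^i = (M_i − m_i·ρ²)/(M_i + m_i·ρ²) ≤ δ* where ρ = b^{-h}. -/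
/-! The uncertainty `(M - m ρ²)/(M + m ρ²)` of a pixel is at most `δ` exactly when
`ρ⁻² ≤ (m / M) (1 + δ) / (1 - δ)`. With `ρ = b^(-h)`, a threshold `h ≤ log_b √K` gives
`ρ⁻² = b^(2h) ≤ K`, and taking `K` with the smallest ratio `m_i / M_i` makes the bound hold
for every pixel at once. -/

open Real

lemma uncertainty_le_of_inv_sq_le {m M δ ρ : ℝ} (hm : 0 < m) (hM : 0 < M) (hδ : δ < 1)
    (hρ : 0 < ρ) (hK : ρ⁻¹ ^ 2 ≤ m / M * (1 + δ) / (1 - δ)) :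
    (M - m * ρ ^ 2) / (M + m * ρ ^ 2) ≤ δ := by
  have hδ' : 0 < 1 - δ := by linarith
  have key : M * (1 - δ) ≤ m * (1 + δ) * ρ ^ 2 := by
    rw [inv_pow, inv_le_iff_one_le_mul₀ (by positivity), div_mul_eq_mul_div, one_le_div hδ',
      div_mul_eq_mul_div, div_mul_eq_mul_div, le_div_iff₀ hM] at hK
    linarith
  rw [div_le_iff₀ (by positivity)]
  linarith

lemma rpow_sq_le_of_le_logb_sqrt {b x K : ℝ} (hb : 1 < b) (hK : 0 < K)
    (hx : x ≤ logb b √K) : (b ^ x) ^ 2 ≤ K := by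
  rw [le_logb_iff_rpow_le hb (sqrt_pos.mpr hK),
    le_sqrt (rpow_nonneg (by linarith) x) hK.le] at hx
  exact hx

lemma iInf_pos_of_finite {ι : Type*} [Finite ι] [Nonempty ι] {f : ι → ℝ}
    (hf : ∀ i, 0 < f i) : 0 < ⨅ i, f i := by
  obtain ⟨j, hj⟩ := exists_eq_ciInf_of_finite (f := f)
  exact hj ▸ hf j

theorem multi_pixel_common_threshold_general
    (b h δs : ℝ) (hb : 1 < b)
    (n : ℕ) (m M : Fin n → ℝ)
    (hm : ∀ i, 0 < m i) (hmM : ∀ i, m i ≤ M i)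
    (hδ : δs ∈ Set.Ioo (0 : ℝ) 1)
    (hth : h ≤ Real.logb b
      (Real.sqrt ((⨅ i, m i / M i) * (1 + δs) / (1 - δs)))) :
    ∀ i, (M i - m i * (b ^ (-h) : ℝ) ^ 2) /
        (M i + m i * (b ^ (-h) : ℝ) ^ 2) ≤ δs := by
  obtain ⟨hδ0, hδ1⟩ := hδ
  intro i
  have : Nonempty (Fin n) := ⟨i⟩
  have hM : ∀ k, 0 < M k := fun k => (hm k).trans_le (hmM k)
  have hmin : 0 < ⨅ k, m k / M k := iInf_pos_of_finite fun k => div_pos (hm k) (hM k)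
  have hδ' : 0 < 1 - δs := sub_pos.2 hδ1
  have hpow := rpow_sq_le_of_le_logb_sqrt hb (by positivity) hth
  refine uncertainty_le_of_inv_sq_le (hm i) (hM i) hδ1 (rpow_pos_of_pos (by linarith) _) ?_
  rw [rpow_neg (by linarith), inv_inv]
  calc (b ^ h) ^ 2 ≤ (⨅ k, m k / M k) * (1 + δs) / (1 - δs) := hpow
    _ ≤ m i / M i * (1 + δs) / (1 - δs) := by
      gcongr
      exact ciInf_le (Finite.bddBelow_range _) i

theorem multi_pixel_common_threshold
    (b h δs : ℝ) (hb : 1 < b) (hh : 0 < h)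
    (n : ℕ) (hn : 0 < n) (m M : Fin n → ℝ)
    (hm : ∀ i, 0 < m i) (hmM : ∀ i, m i ≤ M i)
    (hδ : δs ∈ Set.Ioo (0 : ℝ) 1)
    (hδi : ∀ i, (M i - m i) / (M i + m i) < δs)
    (hth : h ≤ Real.logb b
      (Real.sqrt ((⨅ i, m i / M i) * (1 + δs) / (1 - δs)))) :
    ∀ i, (M i - m i * (b ^ (-h) : ℝ) ^ 2) /
        (M i + m i * (b ^ (-h) : ℝ) ^ 2) ≤ δs :=
  multi_pixel_common_threshold_general b h δs hb n m M hm hmM hδ hth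
end
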